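/- Let α ∈ (0,1), m > 0 with K := 2·m^{1−1/α}, let d, d_w > 0, d_J > 1, L > 1, and let c_1, c_2, c_3, c_4, c_6, C_η, A_9, A_10 > 0 be constants. For c > 0, t > 0, ρ > 0 and measurable η : (0,∞) → [0,∞), set Φ_c(t,ρ) := e^{mt}·∫_0^∞ f_c(s,ρ)·e^{−m^{1/α} s}·η(s) ds. Then there exist constants C_11, C_12 > 0 depending only on the listed constants such that: for every nonnegative integer M, every t ∈ (0,1), every r ∈ (0,1) with r ≤ L^M, and all measurable η, G : (0,∞) → [0,∞) satisfying (i) η(u) ≤ C_η·t·u^{−1−α} for all u > 0; (ii) c_1·f_{c_2}(s,r) ≤ G(s) for all s > 0, G(s) ≤ c_3·f_{c_4}(s,r) for 0 < s < K·L^{M d_w}, and G(s) ≤ c_6·L^{−Md} for s ≥ K·L^{M d_w}; (iii) A_9·q(t,r) ≤ Φ_{c_2}(t,r) and Φ_{c_4}(t,r) ≤ A_10·q(t,r); one has C_11·q(t,r) ≤ e^{mt}·∫_0^∞ G(s)·e^{−m^{1/α} s}·η(s) ds ≤ C_12·q(t,r). -/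

import Mathlib

/-!
The lower bound is immediate from `G ≥ c₁ f_{c₂}`. For the upper bound split the integral at
`S = K L^{M d_w}`: below `S`, `G ≤ c₃ f_{c₄}` gives at most `c₃ Φ_{c₄}(t,r)`; above `S`,
`G ≤ c₆ L^{-Md}` and `η(u) ≤ C_η t u^{-1-α}` bound the tail by a multiple of
`t L^{-Md} S^{-α} = K^{-α} t (L^M)^{-(d+α d_w)}`. Since
`q(t,r) = min(t r^{-(d+α d_w)}, t^{-d/(α d_w)})`, `r ≤ L^M` and `t < 1`, this is at most
`K^{-α} q(t,r)`.
-/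

open MeasureTheory Set

/-- The subgaussian profile `f_c(t,r) = t^{-d/d_w} exp(-c (r / t^{1/d_w})^{d_w/(d_J-1)})`. -/
noncomputable def fprof (d dw dJ c t r : ℝ) : ℝ :=
  t ^ (-(d / dw)) * Real.exp (-c * (r / t ^ (1 / dw)) ^ (dw / (dJ - 1)))

/-- The stable heat-kernel profile
`q(t,r) = t^{-d/(α d_w)} · min((t^{1/(α d_w)}/r)^{d+α d_w}, 1)`. -/
noncomputable def qprof (d dw α t r : ℝ) : ℝ :=
  t ^ (-(d / (α * dw))) * min ((t ^ (1 / (α * dw)) / r) ^ (d + α * dw)) 1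

/-- The relativistic subordination of the subgaussian profile:
`Φ_c(t,ρ) = e^{mt} ∫_0^∞ f_c(s,ρ) e^{-m^{1/α} s} η(s) ds`. -/
noncomputable def Phi (d dw dJ α m : ℝ) (η : ℝ → ℝ) (c t ρ : ℝ) : ℝ :=
  Real.exp (m * t) *
    ∫ s in Ioi (0 : ℝ), fprof d dw dJ c s ρ * Real.exp (-(m ^ (1 / α)) * s) * η s

theorem fprof_nonneg {d dw dJ c r s : ℝ} (hs : 0 < s) : 0 ≤ fprof d dw dJ c s r := by
  unfold fprof; positivity

theorem fprof_eq_rpow_mul_exp {d dw dJ c r s : ℝ} (hdw : 0 < dw) (hr : 0 ≤ r) (hs : 0 < s) :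
    fprof d dw dJ c s r =
      s ^ (-(d / dw)) * Real.exp (-(c * r ^ (dw / (dJ - 1))) * s ^ (-(1 / (dJ - 1)))) := by
  rw [fprof, Real.div_rpow hr (by positivity), ← Real.rpow_mul hs.le,
    Real.rpow_neg hs.le (1 / (dJ - 1)), one_div_mul_eq_div, div_div_cancel_left' hdw.ne',
    ← div_eq_mul_inv, one_div, neg_mul, neg_div, mul_div_assoc]

theorem qprof_eq_min {d dw α t r : ℝ} (hαdw : 0 < α * dw) (ht : 0 < t) (hr : 0 < r) :
    qprof d dw α t r = min (t * r ^ (-(d + α * dw))) (t ^ (-(d / (α * dw)))) := by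
  have hexp : -(d / (α * dw)) + 1 / (α * dw) * (d + α * dw) = 1 := by
    rw [one_div_mul_eq_div, add_div, div_self hαdw.ne']; ring
  rw [qprof, mul_min_of_nonneg _ _ (by positivity), mul_one, Real.div_rpow (by positivity) hr.le,
    ← Real.rpow_mul ht.le, div_eq_mul_inv _ (r ^ _), ← Real.rpow_neg hr.le, ← mul_assoc,
    ← Real.rpow_add ht, hexp, Real.rpow_one]

theorem integrableOn_rpow_mul_exp_neg_mul_rpow_neg {p a γ : ℝ} (hp : p < -1) (ha : 0 < a)
    (hγ : 0 < γ) :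
    IntegrableOn (fun s : ℝ => s ^ p * Real.exp (-a * s ^ (-γ))) (Ioi 0) := by
  -- substitute `s = x⁻¹`, which turns the integrand into `x ^ (-2 - p) * exp (-a * x ^ γ)`
  rw [← integrableOn_Ioi_comp_rpow_iff' _ (show (-1 : ℝ) ≠ 0 by norm_num)]
  refine (integrableOn_rpow_mul_exp_neg_mul_rpow (s := -2 - p) (by linarith) hγ ha).congr_fun
    (fun x (hx : 0 < x) => ?_) measurableSet_Ioi
  rw [smul_eq_mul, ← Real.rpow_mul hx.le, ← Real.rpow_mul hx.le, ← mul_assoc,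
    ← Real.rpow_add hx]
  ring_nf

theorem integrableOn_fprof_mul_of_abs_le_rpow {d dw dJ c r C q : ℝ} {φ : ℝ → ℝ}
    (hdw : 0 < dw) (hdJ : 1 < dJ) (hc : 0 < c) (hr : 0 < r) (hq : q - d / dw < -1)
    (hφ : Measurable φ) (hφle : ∀ s, 0 < s → |φ s| ≤ C * s ^ q) :
    IntegrableOn (fun s => fprof d dw dJ c s r * φ s) (Ioi 0) := by
  have hdom := (integrableOn_rpow_mul_exp_neg_mul_rpow_neg (p := q - d / dw) hq
    (a := c * r ^ (dw / (dJ - 1))) (by positivity)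
    (γ := 1 / (dJ - 1)) (one_div_pos.2 (by linarith))).const_mul C
  refine Integrable.mono' hdom (by unfold fprof; fun_prop) ?_
  refine (ae_restrict_iff' measurableSet_Ioi).2 (ae_of_all _ fun s (hs : 0 < s) => ?_)
  calc ‖fprof d dw dJ c s r * φ s‖ = fprof d dw dJ c s r * |φ s| := by
        rw [Real.norm_eq_abs, abs_mul, abs_of_nonneg (fprof_nonneg hs)]
    _ ≤ fprof d dw dJ c s r * (C * s ^ q) := by
        gcongr
        exacts [fprof_nonneg hs, hφle s hs]
    _ = C * (s ^ (q - d / dw) *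
          Real.exp (-(c * r ^ (dw / (dJ - 1))) * s ^ (-(1 / (dJ - 1))))) := by
        rw [fprof_eq_rpow_mul_exp hdw hr.le hs, show q - d / dw = -(d / dw) + q by ring,
          Real.rpow_add hs]
        ring

theorem integrableOn_Ici_and_setIntegral_le_of_le_rpow {g : ℝ → ℝ} {S B α : ℝ} (hS : 0 < S)
    (hα : 0 < α) (hg : Measurable g) (hg0 : ∀ s, S ≤ s → 0 ≤ g s)
    (hgB : ∀ s, S ≤ s → g s ≤ B * s ^ (-1 - α)) :
    IntegrableOn g (Ici S) ∧ ∫ s in Ici S, g s ≤ B * (S ^ (-α) / α) := by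
  have hpow : IntegrableOn (fun s => B * s ^ (-1 - α)) (Ici S) :=
    (integrableOn_Ici_iff_integrableOn_Ioi).2
      ((integrableOn_Ioi_rpow_of_lt (by linarith) hS).const_mul B)
  have hgi : IntegrableOn g (Ici S) := by
    refine Integrable.mono' hpow hg.aestronglyMeasurable ?_
    refine (ae_restrict_iff' measurableSet_Ici).2 (ae_of_all _ fun s (hs : S ≤ s) => ?_)
    rw [Real.norm_eq_abs, abs_of_nonneg (hg0 s hs)]
    exact hgB s hs
  refine ⟨hgi, ?_⟩
  calc ∫ s in Ici S, g s ≤ ∫ s in Ici S, B * s ^ (-1 - α) :=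
        setIntegral_mono_on hgi hpow measurableSet_Ici hgB
    _ = B * (S ^ (-α) / α) := by
        rw [integral_Ici_eq_integral_Ioi, integral_const_mul,
          integral_Ioi_rpow_of_lt (by linarith) hS, show -1 - α + 1 = -α by ring,
          neg_div_neg_eq]

theorem integrableOn_Ioi_and_setIntegral_le_of_le_rpow {g F : ℝ → ℝ} {S B α : ℝ}
    (hS : 0 < S) (hα : 0 < α) (hg : Measurable g) (hg0 : ∀ s, 0 < s → 0 ≤ g s)
    (hF : IntegrableOn F (Ioi 0)) (hF0 : ∀ s, 0 < s → 0 ≤ F s)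
    (hgF : ∀ s, 0 < s → s < S → g s ≤ F s)
    (hgB : ∀ s, S ≤ s → g s ≤ B * s ^ (-1 - α)) :
    IntegrableOn g (Ioi 0) ∧
      ∫ s in Ioi 0, g s ≤ (∫ s in Ioi 0, F s) + B * (S ^ (-α) / α) := by
  obtain ⟨hgtail, htail⟩ := integrableOn_Ici_and_setIntegral_le_of_le_rpow hS hα hg
    (fun s hs => hg0 s (hS.trans_le hs)) hgB
  have hFS : IntegrableOn F (Ioo 0 S) := hF.mono_set Ioo_subset_Ioi_self
  have hgS : IntegrableOn g (Ioo 0 S) := by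
    refine Integrable.mono' hFS hg.aestronglyMeasurable ?_
    refine (ae_restrict_iff' measurableSet_Ioo).2 (ae_of_all _ fun s hs => ?_)
    rw [Real.norm_eq_abs, abs_of_nonneg (hg0 s hs.1)]
    exact hgF s hs.1 hs.2
  rw [← Ioo_union_Ici_eq_Ioi hS]
  refine ⟨hgS.union hgtail, ?_⟩
  rw [setIntegral_union (Iio_disjoint_Ici le_rfl |>.mono_left Ioo_subset_Iio_self)
    measurableSet_Ici hgS hgtail]
  refine add_le_add ?_ htail
  calc ∫ s in Ioo 0 S, g s ≤ ∫ s in Ioo 0 S, F s :=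
        setIntegral_mono_on hgS hFS measurableSet_Ioo fun s hs => hgF s hs.1 hs.2
    _ ≤ ∫ s in Ioo 0 S ∪ Ici S, F s := by
        rw [Ioo_union_Ici_eq_Ioi hS]
        exact setIntegral_mono_set hF ((ae_restrict_iff' measurableSet_Ioi).2
          (ae_of_all _ hF0)) Ioo_subset_Ioi_self.eventuallyLE

theorem abs_exp_neg_mul_mul_le {κ s x b : ℝ} (hκ : 0 ≤ κ) (hs : 0 ≤ s) (hx : 0 ≤ x)
    (hxb : x ≤ b) : |Real.exp (-κ * s) * x| ≤ b := by
  have hw1 : Real.exp (-κ * s) ≤ 1 := Real.exp_le_one_iff.2 (by nlinarith)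
  calc |Real.exp (-κ * s) * x| = Real.exp (-κ * s) * x :=
        abs_of_nonneg (mul_nonneg (Real.exp_pos _).le hx)
    _ ≤ 1 * b := mul_le_mul hw1 hxb hx zero_le_one
    _ = b := one_mul b

theorem integrableOn_and_setIntegral_le_of_le_fprof_of_le_const
    {d dw dJ c c' κ C B S α r : ℝ} {η G : ℝ → ℝ}
    (hd : 0 < d) (hdw : 0 < dw) (hdJ : 1 < dJ)
    (hc : 0 ≤ c) (hc' : 0 < c') (hr : 0 < r) (hκ : 0 ≤ κ) (hS : 0 < S) (hα : 0 < α)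
    (hη : Measurable η) (hG : Measurable G)
    (hη0 : ∀ u, 0 < u → 0 ≤ η u) (hG0 : ∀ s, 0 < s → 0 ≤ G s)
    (hηle : ∀ u, 0 < u → η u ≤ C * u ^ (-1 - α))
    (hGup : ∀ s, 0 < s → s < S → G s ≤ c * fprof d dw dJ c' s r)
    (hGtail : ∀ s, S ≤ s → G s ≤ B) :
    IntegrableOn (fun s => G s * Real.exp (-κ * s) * η s) (Ioi 0) ∧
      ∫ s in Ioi 0, G s * Real.exp (-κ * s) * η s ≤
        c * (∫ s in Ioi 0, fprof d dw dJ c' s r * Real.exp (-κ * s) * η s) +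
          B * C * (S ^ (-α) / α) := by
  have hwη (s : ℝ) (hs : 0 < s) : |Real.exp (-κ * s) * η s| ≤ C * s ^ (-1 - α) :=
    abs_exp_neg_mul_mul_le hκ hs.le (hη0 s hs) (hηle s hs)
  have hF :
      IntegrableOn (fun s => fprof d dw dJ c' s r * Real.exp (-κ * s) * η s) (Ioi 0) := by
    simpa only [mul_assoc] using integrableOn_fprof_mul_of_abs_le_rpow hdw hdJ hc' hr
      (φ := fun s => Real.exp (-κ * s) * η s) (by have := div_pos hd hdw; linarith)
      (by fun_prop) hwη
  rw [← integral_const_mul]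
  refine integrableOn_Ioi_and_setIntegral_le_of_le_rpow hS hα
    (g := fun s => G s * Real.exp (-κ * s) * η s) (by fun_prop)
    (fun s hs => by have := hη0 s hs; have := hG0 s hs; positivity) (hF.const_mul c)
    (fun s hs => ?_) (fun s hs hsS => ?_) (fun s hs => ?_)
  · have := hη0 s hs
    have : 0 ≤ fprof d dw dJ c' s r := fprof_nonneg hs
    positivity
  · have := hη0 s hs
    rw [← mul_assoc, ← mul_assoc]
    gcongr
    exact hGup s hs hsS
  · have hs0 := hS.trans_le hs
    calc G s * Real.exp (-κ * s) * η s = G s * |Real.exp (-κ * s) * η s| := by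
          rw [mul_assoc, abs_of_nonneg (mul_nonneg (Real.exp_pos _).le (hη0 s hs0))]
      _ ≤ B * (C * s ^ (-1 - α)) :=
          mul_le_mul (hGtail s hs) (hwη s hs0) (abs_nonneg _)
            ((hG0 s hs0).trans (hGtail s hs))
      _ = B * C * s ^ (-1 - α) := by ring

theorem mul_Phi_le_exp_mul_integral {d dw dJ α m c c' t r : ℝ} {η G : ℝ → ℝ}
    (hc : 0 ≤ c) (hη0 : ∀ u, 0 < u → 0 ≤ η u)
    (hGi : IntegrableOn (fun s => G s * Real.exp (-(m ^ (1 / α)) * s) * η s) (Ioi 0))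
    (hG : ∀ s, 0 < s → c * fprof d dw dJ c' s r ≤ G s) :
    c * Phi d dw dJ α m η c' t r ≤
      Real.exp (m * t) * ∫ s in Ioi 0, G s * Real.exp (-(m ^ (1 / α)) * s) * η s := by
  rw [Phi, mul_left_comm, ← integral_const_mul]
  refine mul_le_mul_of_nonneg_left ?_ (Real.exp_pos _).le
  refine integral_mono_of_nonneg ?_ hGi ?_ <;>
    refine (ae_restrict_iff' measurableSet_Ioi).2 (ae_of_all _ fun s (hs : 0 < s) => ?_)
  · have := hη0 s hs
    have : 0 ≤ fprof d dw dJ c' s r := fprof_nonneg hs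
    positivity
  · dsimp only
    rw [← mul_assoc, ← mul_assoc]
    have := hη0 s hs
    gcongr
    exact hG s hs

theorem mul_rpow_neg_le_qprof {d dw α t r R : ℝ} (hd : 0 ≤ d) (hα : 0 < α) (hdw : 0 < dw)
    (ht0 : 0 < t) (ht1 : t ≤ 1) (hr : 0 < r) (hrR : r ≤ R) (hR : 1 ≤ R) :
    t * R ^ (-(d + α * dw)) ≤ qprof d dw α t r := by
  rw [qprof_eq_min (by positivity) ht0 hr]
  refine le_min ?_ ?_
  · exact mul_le_mul_of_nonneg_left
      (Real.rpow_le_rpow_of_nonpos hr hrR (by nlinarith)) ht0.le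
  · calc t * R ^ (-(d + α * dw)) ≤ t * 1 := by
          gcongr; exact Real.rpow_le_one_of_one_le_of_nonpos hR (by nlinarith)
      _ ≤ 1 := by linarith
      _ ≤ t ^ (-(d / (α * dw))) := Real.one_le_rpow_of_pos_of_le_one_of_nonpos ht0 ht1
          (neg_nonpos.2 (by positivity))

theorem mul_rpow_neg_mul_rpow_neg_le_qprof {d dw α K L t r : ℝ} (M : ℕ) (hd : 0 ≤ d)
    (hα : 0 < α) (hdw : 0 < dw) (hK : 0 < K) (hL : 1 ≤ L) (ht0 : 0 < t) (ht1 : t ≤ 1)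
    (hr : 0 < r) (hrL : r ≤ L ^ (M : ℝ)) :
    t * L ^ (-((M : ℝ) * d)) * (K * L ^ ((M : ℝ) * dw)) ^ (-α) ≤
      K ^ (-α) * qprof d dw α t r := by
  have hL0 : 0 < L := by linarith
  have hscale : t * L ^ (-((M : ℝ) * d)) * (K * L ^ ((M : ℝ) * dw)) ^ (-α) =
      K ^ (-α) * (t * (L ^ (M : ℝ)) ^ (-(d + α * dw))) := by
    rw [Real.mul_rpow hK.le (by positivity), ← Real.rpow_mul hL0.le, ← Real.rpow_mul hL0.le,
      mul_left_comm, mul_assoc t, ← Real.rpow_add hL0]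
    ring_nf
  rw [hscale]
  exact mul_le_mul_of_nonneg_left (mul_rpow_neg_le_qprof hd hα hdw ht0 ht1 hr hrL
    (Real.one_le_rpow hL (Nat.cast_nonneg M))) (by positivity)

theorem stmt14_general (α m K d dw dJ L c1 c2 c3 c4 c6 Cη A9 A10 : ℝ)
    (hα0 : 0 < α) (hm : 0 < m)
    (hK : K = 2 * m ^ (1 - 1 / α))
    (hd : 0 < d) (hdw : 0 < dw) (hdJ : 1 < dJ) (hL : 1 < L)
    (hc1 : 0 < c1) (hc3 : 0 < c3) (hc4 : 0 < c4) (hc6 : 0 < c6)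
    (hCη : 0 < Cη) (hA9 : 0 < A9) (hA10 : 0 < A10) :
    ∃ C11 C12 : ℝ, 0 < C11 ∧ 0 < C12 ∧
      ∀ M : ℕ,
      ∀ t : ℝ, 0 < t → t < 1 →
      ∀ r : ℝ, 0 < r → r < 1 → r ≤ L ^ (M : ℝ) →
      ∀ η G : ℝ → ℝ, Measurable η → Measurable G →
        (∀ u, 0 < u → 0 ≤ η u) → (∀ s, 0 < s → 0 ≤ G s) →
        (∀ u, 0 < u → η u ≤ Cη * t * u ^ (-1 - α)) →
        (∀ s, 0 < s → c1 * fprof d dw dJ c2 s r ≤ G s) →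
        (∀ s, 0 < s → s < K * L ^ ((M : ℝ) * dw) → G s ≤ c3 * fprof d dw dJ c4 s r) →
        (∀ s, K * L ^ ((M : ℝ) * dw) ≤ s → G s ≤ c6 * L ^ (-((M : ℝ) * d))) →
        (A9 * qprof d dw α t r ≤ Phi d dw dJ α m η c2 t r) →
        (Phi d dw dJ α m η c4 t r ≤ A10 * qprof d dw α t r) →
        C11 * qprof d dw α t r ≤
            Real.exp (m * t) *
              (∫ s in Ioi (0 : ℝ), G s * Real.exp (-(m ^ (1 / α)) * s) * η s) ∧
          Real.exp (m * t) *
              (∫ s in Ioi (0 : ℝ), G s * Real.exp (-(m ^ (1 / α)) * s) * η s) ≤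
            C12 * qprof d dw α t r := by
  have hK0 : 0 < K := hK ▸ by positivity
  refine ⟨c1 * A9, c3 * A10 + Real.exp m * (c6 * Cη / α) * K ^ (-α), by positivity,
    by positivity, ?_⟩
  intro M t ht0 ht1 r hr0 _ hrL η G hη hG hη0 hG0 hηle hGlow hGup hGtail hΦ2 hΦ4
  obtain ⟨hGi, hGle⟩ := integrableOn_and_setIntegral_le_of_le_fprof_of_le_const
    (κ := m ^ (1 / α)) hd hdw hdJ hc3.le hc4 hr0 (by positivity) (by positivity) hα0 hη hG hη0
    hG0 hηle hGup hGtail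
  constructor
  · calc c1 * A9 * qprof d dw α t r ≤ c1 * Phi d dw dJ α m η c2 t r := by
          rw [mul_assoc]; gcongr
      _ ≤ _ := mul_Phi_le_exp_mul_integral hc1.le hη0 hGi hGlow
  · calc _ ≤ c3 * Phi d dw dJ α m η c4 t r + Real.exp (m * t) * (c6 * Cη / α) *
            (t * L ^ (-((M : ℝ) * d)) * (K * L ^ ((M : ℝ) * dw)) ^ (-α)) := by
          rw [Phi]
          refine (mul_le_mul_of_nonneg_left hGle (Real.exp_pos _).le).trans_eq ?_
          ring
      _ ≤ c3 * (A10 * qprof d dw α t r) + Real.exp m * (c6 * Cη / α) *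
            (K ^ (-α) * qprof d dw α t r) := by
          refine add_le_add (by gcongr) (mul_le_mul ?_
            (mul_rpow_neg_mul_rpow_neg_le_qprof M hd.le hα0 hdw hK0 hL.le ht0 ht1.le hr0 hrL)
            (by positivity) (by positivity))
          gcongr
          nlinarith
      _ = (c3 * A10 + Real.exp m * (c6 * Cη / α) * K ^ (-α)) * qprof d dw α t r := by ring

/-- regime `t ∈ (0,1)`, `r ∈ (0,1)` of the estimates following
Theorem 4.1: the reflected relativistic kernel is two-sided comparable to the
stable profile `q(t,r)`, with constants independent of `M`. -/
theorem stmt14 (α m K d dw dJ L c1 c2 c3 c4 c6 Cη A9 A10 : ℝ)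
    (hα0 : 0 < α) (hα1 : α < 1) (hm : 0 < m)
    (hK : K = 2 * m ^ (1 - 1 / α))
    (hd : 0 < d) (hdw : 0 < dw) (hdJ : 1 < dJ) (hL : 1 < L)
    (hc1 : 0 < c1) (hc2 : 0 < c2) (hc3 : 0 < c3) (hc4 : 0 < c4) (hc6 : 0 < c6)
    (hCη : 0 < Cη) (hA9 : 0 < A9) (hA10 : 0 < A10) :
    ∃ C11 C12 : ℝ, 0 < C11 ∧ 0 < C12 ∧
      ∀ M : ℕ,
      ∀ t : ℝ, 0 < t → t < 1 →
      ∀ r : ℝ, 0 < r → r < 1 → r ≤ L ^ (M : ℝ) →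
      ∀ η G : ℝ → ℝ, Measurable η → Measurable G →
        (∀ u, 0 < u → 0 ≤ η u) → (∀ s, 0 < s → 0 ≤ G s) →
        (∀ u, 0 < u → η u ≤ Cη * t * u ^ (-1 - α)) →
        (∀ s, 0 < s → c1 * fprof d dw dJ c2 s r ≤ G s) →
        (∀ s, 0 < s → s < K * L ^ ((M : ℝ) * dw) → G s ≤ c3 * fprof d dw dJ c4 s r) →
        (∀ s, K * L ^ ((M : ℝ) * dw) ≤ s → G s ≤ c6 * L ^ (-((M : ℝ) * d))) →
        (A9 * qprof d dw α t r ≤ Phi d dw dJ α m η c2 t r) →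
        (Phi d dw dJ α m η c4 t r ≤ A10 * qprof d dw α t r) →
        C11 * qprof d dw α t r ≤
            Real.exp (m * t) *
              (∫ s in Ioi (0 : ℝ), G s * Real.exp (-(m ^ (1 / α)) * s) * η s) ∧
          Real.exp (m * t) *
              (∫ s in Ioi (0 : ℝ), G s * Real.exp (-(m ^ (1 / α)) * s) * η s) ≤
            C12 * qprof d dw α t r :=
  stmt14_general α m K d dw dJ L c1 c2 c3 c4 c6 Cη A9 A10 hα0 hm hK hd hdw hdJ hL hc1 hc3 hc4 hc6
    hCη hA9 hA10
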